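/- arXiv:1209.4537 — 4 statements merged into one kernel-verified Lean document; each statement's English description precedes it below -/
import Mathlib

section
/- For the function Ψ(x) = I₁(x)/I₀(x), where I₀(x) = (1/2π)∫₀^{2π} exp(x cos θ) dθ and I₁(x) = (1/2π)∫₀^{2π} cos θ · exp(x cos θ) dθ are modified Bessel functions, the fixed point equation r = Ψ(2Kr) admits a strictly positive solution r > 0 if and only if K > 1. -/
open Real MeasureTheory

/-- Modified Bessel function of the first kind of order `j` (integral formula). -/
noncomputable def besselI (j : ℕ) (x : ℝ) : ℝ :=
  (1 / (2 * π)) * ∫ θ in (0:ℝ)..(2 * π), (Real.cos θ) ^ j * Real.exp (x * Real.cos θ)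

/-- `Ψ(x) = I₁(x)/I₀(x)`. -/
noncomputable def Psi (x : ℝ) : ℝ := besselI 1 x / besselI 0 x

/-!
Integrating `d/dθ (sin θ · g θ)` over a period, with `g = e^{x cos θ}` and
`g = cos θ · e^{x cos θ}`, gives `2π I₁(x) = x A` and `2π I₀(x) = 2A + x B`, where
`A = ∫ sin² θ e^{x cos θ}` and `B = ∫ sin² θ cos θ e^{x cos θ}`. Since `∫ sin² θ cos θ = 0` and
`cos θ (e^{x cos θ} - 1) ≥ 0`, we get `B > 0` for `x > 0`, hence `Ψ(x) < x/2`, and a positive fixed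
point `r = Ψ(2Kr) < Kr` forces `K > 1`. Conversely `e^t ≥ 1 + t` gives `A ≥ π`, and with
`I₀(x) ≤ eˣ` this yields `Ψ(x) ≥ x e^{-x}/2`; for `K > 1` this makes `Ψ(2Kr) > r` for some `r > 0`,
while `Ψ < 1`, and the intermediate value theorem gives a fixed point.
-/

open intervalIntegral

theorem integral_cos_mul_add_sin_mul_deriv_eq_zero {g g' : ℝ → ℝ}
    (hg : ∀ θ, HasDerivAt g (g' θ) θ) (hg' : Continuous g') :
    ∫ θ in (0)..(2 * π), (cos θ * g θ + sin θ * g' θ) = 0 := by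
  have hgc : Continuous g := continuous_iff_continuousAt.2 fun θ => (hg θ).continuousAt
  rw [integral_eq_sub_of_hasDerivAt (f := fun θ => sin θ * g θ)
    (fun θ _ => (hasDerivAt_sin θ).mul (hg θ))
    ((by fun_prop : Continuous _).intervalIntegrable _ _)]
  simp

theorem le_mul_exp_mul {x : ℝ} (hx : 0 ≤ x) (c : ℝ) : c ≤ c * exp (x * c) := by
  rcases le_total 0 c with hc | hc
  · exact le_mul_of_one_le_right hc (one_le_exp (mul_nonneg hx hc))
  · nlinarith [exp_le_one_iff.2 (mul_nonpos_of_nonneg_of_nonpos hx hc)]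

theorem integral_cos_mul_exp_mul_cos (x : ℝ) :
    ∫ θ in (0)..(2 * π), cos θ * exp (x * cos θ) =
      x * ∫ θ in (0)..(2 * π), sin θ ^ 2 * exp (x * cos θ) := by
  have h := integral_cos_mul_add_sin_mul_deriv_eq_zero (g := fun θ => exp (x * cos θ))
    (fun θ => ((hasDerivAt_cos θ).const_mul x).exp) (by fun_prop)
  simp only [show ∀ θ, cos θ * exp (x * cos θ) + sin θ * (exp (x * cos θ) * (x * -sin θ)) =
    cos θ * exp (x * cos θ) - x * (sin θ ^ 2 * exp (x * cos θ)) from fun θ => by ring] at h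
  rwa [integral_sub (Continuous.intervalIntegrable (by fun_prop) _ _)
    (Continuous.intervalIntegrable (by fun_prop) _ _), intervalIntegral.integral_const_mul,
    sub_eq_zero] at h

theorem integral_exp_mul_cos (x : ℝ) :
    ∫ θ in (0)..(2 * π), exp (x * cos θ) =
      2 * (∫ θ in (0)..(2 * π), sin θ ^ 2 * exp (x * cos θ)) +
        x * ∫ θ in (0)..(2 * π), sin θ ^ 2 * cos θ * exp (x * cos θ) := by
  have h := integral_cos_mul_add_sin_mul_deriv_eq_zero (g := fun θ => cos θ * exp (x * cos θ))
    (fun θ => (hasDerivAt_cos θ).mul ((hasDerivAt_cos θ).const_mul x).exp) (by fun_prop)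
  simp only [show ∀ θ, cos θ * (cos θ * exp (x * cos θ)) + sin θ * (-sin θ * exp (x * cos θ) +
      cos θ * (exp (x * cos θ) * (x * -sin θ))) = exp (x * cos θ) -
        (2 * (sin θ ^ 2 * exp (x * cos θ)) + x * (sin θ ^ 2 * cos θ * exp (x * cos θ))) from
      fun θ => by linear_combination exp (x * cos θ) * cos_sq_add_sin_sq θ] at h
  rwa [integral_sub (Continuous.intervalIntegrable (by fun_prop) _ _)
    (Continuous.intervalIntegrable (by fun_prop) _ _),
    integral_add (Continuous.intervalIntegrable (by fun_prop) _ _)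
    (Continuous.intervalIntegrable (by fun_prop) _ _), intervalIntegral.integral_const_mul,
    intervalIntegral.integral_const_mul, sub_eq_zero] at h

theorem integral_sin_sq_mul_cos_mul_exp_mul_cos_pos {x : ℝ} (hx : 0 < x) :
    0 < ∫ θ in (0)..(2 * π), sin θ ^ 2 * cos θ * exp (x * cos θ) := by
  calc (0 : ℝ) = ∫ θ in (0)..(2 * π), sin θ ^ 2 * cos θ := by simp [integral_sin_sq_mul_cos]
    _ < _ := by
      refine integral_lt_integral_of_continuousOn_of_le_of_exists_lt (by positivity)
        (by fun_prop) (by fun_prop) (fun θ _ => ?_)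
        ⟨π / 4, ⟨by positivity, by linarith [pi_pos]⟩, ?_⟩
      · rw [mul_assoc]
        exact mul_le_mul_of_nonneg_left (le_mul_exp_mul hx.le _) (sq_nonneg _)
      · have hcos : 0 < cos (π / 4) := by rw [cos_pi_div_four]; positivity
        have hsin : 0 < sin (π / 4) := by rw [sin_pi_div_four]; positivity
        rw [mul_assoc]
        exact mul_lt_mul_of_pos_left
          (lt_mul_of_one_lt_right hcos (one_lt_exp_iff.2 (mul_pos hx hcos))) (by positivity)

theorem continuous_besselI (j : ℕ) : Continuous (besselI j) :=
  continuous_const.mul <| continuous_parametric_intervalIntegral_of_continuous' (by fun_prop) _ _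

theorem besselI_zero_pos (x : ℝ) : 0 < besselI 0 x :=
  mul_pos (by positivity) <| intervalIntegral_pos_of_pos
    (Continuous.intervalIntegrable (by fun_prop) _ _) (fun _ => by positivity) (by positivity)

theorem besselI_one_lt_besselI_zero (x : ℝ) : besselI 1 x < besselI 0 x := by
  refine mul_lt_mul_of_pos_left (integral_lt_integral_of_continuousOn_of_le_of_exists_lt
    (by positivity) (by fun_prop) (by fun_prop) (fun θ _ => ?_)
    ⟨π, ⟨pi_pos.le, by linarith [pi_pos]⟩, ?_⟩) (by positivity)
  · simpa using mul_le_of_le_one_left (exp_pos _).le (cos_le_one θ)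
  · simp [cos_pi, exp_pos]

theorem besselI_zero_le_exp {x : ℝ} (hx : 0 ≤ x) : besselI 0 x ≤ exp x := by
  have hmono : ∫ θ in (0)..(2 * π), cos θ ^ 0 * exp (x * cos θ) ≤ ∫ θ in (0)..(2 * π), exp x :=
    integral_mono_on (by positivity) (Continuous.intervalIntegrable (by fun_prop) _ _)
      intervalIntegrable_const fun θ _ => by
        simpa using mul_le_of_le_one_right hx (cos_le_one θ)
  calc besselI 0 x ≤ 1 / (2 * π) * ∫ θ in (0)..(2 * π), exp x :=
        mul_le_mul_of_nonneg_left hmono (by positivity)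
    _ = exp x := by field_simp; simp

theorem half_le_besselI_one {x : ℝ} (hx : 0 ≤ x) : x / 2 ≤ besselI 1 x := by
  have hA : π ≤ ∫ θ in (0)..(2 * π), sin θ ^ 2 * exp (x * cos θ) :=
    calc π = ∫ θ in (0)..(2 * π), (sin θ ^ 2 + x * (sin θ ^ 2 * cos θ)) := by
          rw [integral_add (Continuous.intervalIntegrable (by fun_prop) _ _)
            (Continuous.intervalIntegrable (by fun_prop) _ _), intervalIntegral.integral_const_mul,
            integral_sin_sq, integral_sin_sq_mul_cos]
          simp
      _ ≤ _ := integral_mono_on (by positivity) (Continuous.intervalIntegrable (by fun_prop) _ _)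
          (Continuous.intervalIntegrable (by fun_prop) _ _) fun θ _ => by
            nlinarith [add_one_le_exp (x * cos θ), sq_nonneg (sin θ)]
  calc x / 2 = 1 / (2 * π) * (x * π) := by field_simp
    _ ≤ besselI 1 x := by
      simp only [besselI, pow_one, integral_cos_mul_exp_mul_cos]
      gcongr

theorem two_mul_besselI_one_lt {x : ℝ} (hx : 0 < x) : 2 * besselI 1 x < x * besselI 0 x := by
  simp only [besselI, pow_zero, one_mul, pow_one]
  rw [integral_cos_mul_exp_mul_cos, integral_exp_mul_cos]
  have hB := integral_sin_sq_mul_cos_mul_exp_mul_cos_pos hx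
  have := mul_pos (mul_pos (by positivity : (0 : ℝ) < 1 / (2 * π)) (pow_pos hx 2)) hB
  linarith

@[fun_prop]
theorem continuous_Psi : Continuous Psi :=
  (continuous_besselI 1).div (continuous_besselI 0) fun x => (besselI_zero_pos x).ne'

theorem Psi_lt_one (x : ℝ) : Psi x < 1 :=
  (div_lt_one (besselI_zero_pos x)).2 (besselI_one_lt_besselI_zero x)

theorem Psi_lt_half {x : ℝ} (hx : 0 < x) : Psi x < x / 2 := by
  rw [Psi, div_lt_iff₀ (besselI_zero_pos x)]
  linarith [two_mul_besselI_one_lt hx]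

theorem half_div_exp_le_Psi {x : ℝ} (hx : 0 ≤ x) : x / 2 / exp x ≤ Psi x :=
  div_le_div₀ (by linarith [half_le_besselI_one hx]) (half_le_besselI_one hx)
    (besselI_zero_pos x) (besselI_zero_le_exp hx)

theorem exists_lt_Psi_two_mul {K : ℝ} (hK : 1 < K) : ∃ r, 0 < r ∧ r < Psi (2 * K * r) := by
  have hx : 0 < log K / 2 := by have := log_pos hK; positivity
  have hexp : exp (log K / 2) < K := by
    calc exp (log K / 2) < exp (log K) := exp_lt_exp.2 (by linarith)
      _ = K := exp_log (by linarith)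
  refine ⟨log K / 2 / 2 / K, by positivity, ?_⟩
  rw [show 2 * K * (log K / 2 / 2 / K) = log K / 2 by field_simp]
  exact (div_lt_div_of_pos_left (by positivity) (exp_pos _) hexp).trans_le
    (half_div_exp_le_Psi hx.le)

/-- The fixed point equation `r = Ψ(2Kr)` has a strictly positive solution iff `K > 1`. -/
theorem fixed_point_positive_solution_iff (K : ℝ) (hK : 0 < K) :
    (∃ r : ℝ, 0 < r ∧ r = Psi (2 * K * r)) ↔ 1 < K := by
  constructor
  · rintro ⟨r, hr, hfix⟩
    by_contra! hK1
    refine lt_irrefl r ?_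
    calc r = Psi (2 * K * r) := hfix
      _ < 2 * K * r / 2 := Psi_lt_half (by positivity)
      _ = K * r := by ring
      _ ≤ r := mul_le_of_le_one_left hr.le hK1
  · intro hK1
    obtain ⟨r₀, hr₀, hlt⟩ := exists_lt_Psi_two_mul hK1
    have hr₀1 : r₀ ≤ 1 := (hlt.trans (Psi_lt_one _)).le
    have hcont : Continuous fun r => Psi (2 * K * r) - r := by fun_prop
    obtain ⟨r, hr, hfix⟩ := intermediate_value_Icc' hr₀1 hcont.continuousOn
      (show (0 : ℝ) ∈ Set.Icc _ _ from ⟨by linarith [Psi_lt_one (2 * K * 1)], by linarith⟩)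
    exact ⟨r, hr₀.trans_le hr.1, (sub_eq_zero.1 hfix).symm⟩
end

section
/- The derivative q' of the stationary density q(θ) = exp(2Kr cos θ)/(2π I₀(2Kr)) satisfies L_q q' = 0, where L_q u = (1/2)u'' − (u·(J*q) + q·(J*u))' with J(θ) = −K sin θ; i.e. q' lies in the kernel of the linearized operator. -/
/-!
Rotations of the circle commute with the Fokker–Planck operator, so every translate of the
stationary density is again stationary and `q'`, the infinitesimal translate, lies in the kernel
of the linearization. Concretely: the convolution `J * ·` commutes with `d/dθ` on periodic
functions, so `q'·(J*q) + q·(J*q') = (q·(J*q))'`, and the fixed-point equation for `r` says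
exactly that `q·(J*q) = q'/2`.
-/

open Real MeasureTheory

/-- The stationary density `q(θ) = exp(2Kr cos θ)/(2π I₀(2Kr))`. -/
noncomputable def q (K r θ : ℝ) : ℝ :=
  Real.exp (2 * K * r * Real.cos θ) / (2 * π * besselI 0 (2 * K * r))

/-- Convolution with `J(θ) = -K sin θ` on the circle. -/
noncomputable def Jconv (K : ℝ) (p : ℝ → ℝ) (θ : ℝ) : ℝ :=
  ∫ θ' in (0:ℝ)..(2 * π), (-K * Real.sin (θ - θ')) * p θ'

theorem integral_sin_mul_comp_cos {F : ℝ → ℝ} (hF : Continuous F) :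
    ∫ θ in (0:ℝ)..2 * π, sin θ * F (cos θ) = 0 := by
  have h := intervalIntegral.integral_comp_mul_deriv (a := 0) (b := 2 * π)
    (fun θ _ => hasDerivAt_cos θ) continuous_sin.neg.continuousOn hF
  simp only [cos_zero, cos_two_pi, intervalIntegral.integral_same, Function.comp_apply, mul_neg,
    intervalIntegral.integral_neg, neg_eq_zero] at h
  simpa only [mul_comm] using h

theorem integral_mul_deriv_of_periodic {u u' p : ℝ → ℝ} {T : ℝ}
    (hu : ∀ x, HasDerivAt u (u' x) x) (hu' : Continuous u') (hp : ContDiff ℝ 1 p)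
    (hu_per : Function.Periodic u T) (hp_per : Function.Periodic p T) :
    ∫ x in (0:ℝ)..T, u x * deriv p x = -∫ x in (0:ℝ)..T, u' x * p x := by
  rw [intervalIntegral.integral_mul_deriv_eq_deriv_mul (fun x _ => hu x)
    (fun x _ => (hp.differentiable one_ne_zero x).hasDerivAt)
    (hu'.intervalIntegrable _ _) ((hp.continuous_deriv le_rfl).intervalIntegrable _ _)]
  have hu_T := hu_per 0
  have hp_T := hp_per 0
  rw [zero_add] at hu_T hp_T
  rw [hu_T, hp_T, sub_self, zero_sub]

theorem Jconv_eq_sin_cos {p : ℝ → ℝ} (K : ℝ) (hp : Continuous p) (θ : ℝ) :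
    Jconv K p θ = -K * (sin θ * (∫ x in (0:ℝ)..2 * π, cos x * p x)
      - cos θ * ∫ x in (0:ℝ)..2 * π, sin x * p x) := by
  have h : (fun x => -K * sin (θ - x) * p x)
      = fun x => -K * sin θ * (cos x * p x) - -K * cos θ * (sin x * p x) := by
    funext x
    rw [sin_sub]
    ring
  rw [Jconv, h,
    intervalIntegral.integral_sub ((by fun_prop : Continuous _).intervalIntegrable _ _)
      ((by fun_prop : Continuous _).intervalIntegrable _ _),
    intervalIntegral.integral_const_mul, intervalIntegral.integral_const_mul]
  ring

theorem hasDerivAt_Jconv {p : ℝ → ℝ} (K : ℝ) (hp : ContDiff ℝ 1 p)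
    (hper : Function.Periodic p (2 * π)) (θ : ℝ) :
    HasDerivAt (Jconv K p) (Jconv K (deriv p) θ) θ := by
  have hcos := integral_mul_deriv_of_periodic hasDerivAt_cos continuous_sin.neg hp
    cos_periodic hper
  have hsin := integral_mul_deriv_of_periodic hasDerivAt_sin continuous_cos hp sin_periodic hper
  simp only [neg_mul, intervalIntegral.integral_neg, neg_neg] at hcos
  rw [funext (Jconv_eq_sin_cos K hp.continuous),
    Jconv_eq_sin_cos K (hp.continuous_deriv le_rfl), hcos, hsin]
  refine ((((hasDerivAt_sin θ).mul_const _).sub ((hasDerivAt_cos θ).mul_const _)).const_mul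
    (-K)).congr_deriv ?_
  ring

theorem hasDerivAt_q (K r θ : ℝ) :
    HasDerivAt (q K r) (-(2 * K * r * sin θ) * q K r θ) θ := by
  have h := (((hasDerivAt_cos θ).const_mul (2 * K * r)).exp).div_const
    (2 * π * besselI 0 (2 * K * r))
  refine h.congr_deriv ?_
  unfold q
  ring

theorem contDiff_q (K r : ℝ) : ContDiff ℝ 1 (q K r) := by
  unfold q
  fun_prop

theorem q_periodic (K r : ℝ) : Function.Periodic (q K r) (2 * π) := fun θ => by
  rw [q, q, cos_periodic θ]

theorem integral_sin_mul_q (K r : ℝ) : ∫ θ in (0:ℝ)..2 * π, sin θ * q K r θ = 0 :=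
  integral_sin_mul_comp_cos
    (F := fun x => exp (2 * K * r * x) / (2 * π * besselI 0 (2 * K * r))) (by fun_prop)

theorem integral_cos_mul_q (K r : ℝ) :
    ∫ θ in (0:ℝ)..2 * π, cos θ * q K r θ
      = besselI 1 (2 * K * r) / besselI 0 (2 * K * r) := by
  simp only [q, ← mul_div_assoc, intervalIntegral.integral_div]
  rw [besselI.eq_1 1]
  simp only [pow_one]
  ring

theorem Jconv_q (K r θ : ℝ) :
    Jconv K (q K r) θ = -K * (besselI 1 (2 * K * r) / besselI 0 (2 * K * r)) * sin θ := by
  rw [Jconv_eq_sin_cos K (contDiff_q K r).continuous, integral_cos_mul_q, integral_sin_mul_q]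
  ring

theorem q_stationary (K r : ℝ) (hfix : r = besselI 1 (2 * K * r) / besselI 0 (2 * K * r))
    (θ : ℝ) : q K r θ * Jconv K (q K r) θ = 1 / 2 * deriv (q K r) θ := by
  rw [(hasDerivAt_q K r θ).deriv, Jconv_q, ← hfix]
  ring

theorem q_deriv_in_kernel_general (K r : ℝ)
    (hfix : r = besselI 1 (2 * K * r) / besselI 0 (2 * K * r)) :
    ∀ θ : ℝ,
      (1 / 2) * deriv (deriv (deriv (q K r))) θ
        - deriv (fun θ' => deriv (q K r) θ' * Jconv K (q K r) θ'
            + q K r θ' * Jconv K (deriv (q K r)) θ') θ = 0 := by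
  intro θ
  have hflux : (fun θ' => deriv (q K r) θ' * Jconv K (q K r) θ'
      + q K r θ' * Jconv K (deriv (q K r)) θ')
      = deriv (fun θ' => q K r θ' * Jconv K (q K r) θ') :=
    funext fun θ' => (((contDiff_q K r).differentiable one_ne_zero θ').hasDerivAt.mul
      (hasDerivAt_Jconv K (contDiff_q K r) (q_periodic K r) θ')).deriv.symm
  rw [hflux, funext (q_stationary K r hfix), deriv_const_mul_field', deriv_const_mul_field,
    sub_self]

/-- `q'` lies in the kernel of the linearized operator:
`L_q q' = (1/2)(q')'' − (q'·(J*q) + q·(J*q'))' = 0`. -/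
theorem q_deriv_in_kernel (K r : ℝ) (hK : 1 < K) (hr : 0 < r)
    (hfix : r = besselI 1 (2 * K * r) / besselI 0 (2 * K * r)) :
    ∀ θ : ℝ,
      (1 / 2) * deriv (deriv (deriv (q K r))) θ
        - deriv (fun θ' => deriv (q K r) θ' * Jconv K (q K r) θ'
            + q K r θ' * Jconv K (deriv (q K r)) θ') θ = 0 :=
  q_deriv_in_kernel_general K r hfix
end

section
/- Suppose the spectrum of a nonpositive self-adjoint operator −L consists of eigenvalues λ_0 = 0 < λ_1 ≤ λ_2 ≤ … with λ_l ≥ l²/C for l ≥ 1. Then for all 0 ≤ s' < t' < t: Σ_{l=0}^∞ ∫_{s'}^{t'} e^{−2(t−u)λ_l} du ≤ C'·h₁(t'−s'), where h₁(u) = √u for u ∈ [0,1) and h₁(u) = u for u ≥ 1, and C' depends only on C. (The l = 0 term contributes t'−s'; the sum over l ≥ 1 of (C/l²)(1 − e^{−(t'−s')l²/C}) is bounded by (3+2C)√(t'−s') when t'−s' < 1 and by a constant when t'−s' ≥ 1.) -/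
open Real MeasureTheory

noncomputable def h1 (u : ℝ) : ℝ := if u < 1 then Real.sqrt u else u

/-!
Each integral is at most `min (t' - s') (1 / (2 λ_l))`, and `1 / (2 λ_l) ≤ (C / 2) / l²`.
Bounding the first `k + 1` terms by `t' - s'` and the rest by `(C / 2) Σ_{l > k} 1 / l² ≤ (C / 2) / k`
gives `(k + 1) (t' - s') + (C / 2) / k`; take `k ≈ (t' - s')^{-1/2}` if `t' - s' < 1` and `k = 1`
otherwise.
-/

section HeatIntegral

variable {s t' t a : ℝ}

lemma integral_exp_neg_two_mul_le_sub (ha : 0 ≤ a) (hs : s ≤ t') (ht : t' ≤ t) :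
    ∫ u in s..t', exp (-2 * (t - u) * a) ≤ t' - s := by
  calc ∫ u in s..t', exp (-2 * (t - u) * a) ≤ ∫ _ in s..t', (1 : ℝ) := by
        refine intervalIntegral.integral_mono_on hs
          ((by fun_prop : Continuous _).intervalIntegrable _ _) (by simp) fun u hu => ?_
        rw [exp_le_one_iff]
        nlinarith [hu.2]
    _ = t' - s := by simp

lemma integral_exp_neg_two_mul_le_inv (ha : 0 < a) (ht : t' ≤ t) :
    ∫ u in s..t', exp (-2 * (t - u) * a) ≤ (2 * a)⁻¹ := by
  have hderiv (u : ℝ) : HasDerivAt (fun v => (2 * a)⁻¹ * exp (-2 * (t - v) * a))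
      (exp (-2 * (t - u) * a)) u := by
    refine (((((hasDerivAt_id u).const_sub t).const_mul (-2)).mul_const a).exp.const_mul
      (2 * a)⁻¹).congr_deriv ?_
    simp only [id]
    field_simp
  rw [intervalIntegral.integral_eq_sub_of_hasDerivAt (fun u _ => hderiv u)
    ((by fun_prop : Continuous _).intervalIntegrable _ _)]
  have hexp : exp (-2 * (t - t') * a) ≤ 1 := by rw [exp_le_one_iff]; nlinarith
  have hpos : 0 < (2 * a)⁻¹ * exp (-2 * (t - s) * a) := by positivity
  nlinarith [inv_pos.2 (by positivity : 0 < 2 * a)]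

end HeatIntegral

lemma tsum_le_of_le_of_le_div_sq {f : ℕ → ℝ} {δ B : ℝ} (hf : ∀ l, 0 ≤ f l)
    (hδ : ∀ l, f l ≤ δ) (hB : ∀ l, 1 ≤ l → f l ≤ B / (l : ℝ) ^ 2) (hB0 : 0 ≤ B)
    {k : ℕ} (hk : k ≠ 0) :
    ∑' l, f l ≤ (k + 1) * δ + B / k := by
  refine Real.tsum_le_of_sum_range_le hf fun n => ?_
  have head : ∑ l ∈ Finset.range (k + 1), f l ≤ (k + 1) * δ := by
    simpa using Finset.sum_le_sum fun l (_ : l ∈ Finset.range (k + 1)) => hδ l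
  have tail : ∑ l ∈ Finset.Ioc k (k + n), f l ≤ B / k := calc
    ∑ l ∈ Finset.Ioc k (k + n), f l ≤ ∑ l ∈ Finset.Ioc k (k + n), B * ((l : ℝ) ^ 2)⁻¹ :=
        Finset.sum_le_sum fun l hl => by
          rw [← div_eq_mul_inv]; exact hB l (by have := (Finset.mem_Ioc.1 hl).1; omega)
    _ ≤ B * ((k : ℝ)⁻¹ - ((k + n : ℕ) : ℝ)⁻¹) := by
        rw [← Finset.mul_sum]
        exact mul_le_mul_of_nonneg_left (sum_Ioc_inv_sq_le_sub hk (by omega)) hB0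
    _ ≤ B / k := by
        rw [div_eq_mul_inv]
        exact mul_le_mul_of_nonneg_left (sub_le_self _ (by positivity)) hB0
  calc ∑ l ∈ Finset.range n, f l ≤ ∑ l ∈ Finset.range (k + n + 1), f l :=
        Finset.sum_le_sum_of_subset_of_nonneg (Finset.range_subset_range.2 (by omega))
          fun l _ _ => hf l
    _ = ∑ l ∈ Finset.range (k + 1), f l + ∑ l ∈ Finset.Ioc k (k + n), f l := by
        rw [← Finset.sum_range_add_sum_Ico _ (by omega : k + 1 ≤ k + n + 1),
          Finset.Ico_add_one_add_one_eq_Ioc]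
    _ ≤ (k + 1) * δ + B / k := add_le_add head tail

lemma exists_mul_add_div_le_h1 {δ B : ℝ} (hδ : 0 < δ) (hB : 0 ≤ B) :
    ∃ k : ℕ, k ≠ 0 ∧ (k + 1) * δ + B / k ≤ (3 + B) * h1 δ := by
  by_cases hδ1 : δ < 1
  · have hsqrt : 0 < √δ := sqrt_pos.2 hδ
    refine ⟨⌈(√δ)⁻¹⌉₊, by positivity, ?_⟩
    rw [h1, if_pos hδ1]
    have hk_ge : (√δ)⁻¹ ≤ ⌈(√δ)⁻¹⌉₊ := Nat.le_ceil _
    have hk_le : (⌈(√δ)⁻¹⌉₊ : ℝ) < (√δ)⁻¹ + 1 := Nat.ceil_lt_add_one (by positivity)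
    have hδ_le : δ ≤ √δ := by
      rw [le_sqrt hδ.le hδ.le]; nlinarith
    have hhead : (⌈(√δ)⁻¹⌉₊ + 1) * δ ≤ 3 * √δ := calc
      _ ≤ ((√δ)⁻¹ + 2) * δ := mul_le_mul_of_nonneg_right (by linarith) hδ.le
      _ = √δ + 2 * δ := by
        rw [add_mul, inv_mul_eq_div, div_sqrt]
      _ ≤ 3 * √δ := by linarith
    have htail : B / ⌈(√δ)⁻¹⌉₊ ≤ B * √δ := calc
      _ ≤ B / (√δ)⁻¹ := by gcongr
      _ = B * √δ := by rw [div_inv_eq_mul]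
    linarith
  · refine ⟨1, one_ne_zero, ?_⟩
    rw [h1, if_neg hδ1]
    push_cast
    nlinarith

/-- If `λ₀ = 0` and `λ_l ≥ l²/C` for `l ≥ 1` (`C > 1`), then for all
`0 ≤ s' < t' < t`, `Σ_l ∫_{s'}^{t'} e^{−2(t−u)λ_l} du ≤ C' h₁(t'−s')`, with `C'`
depending only on `C`. -/
theorem heat_kernel_sum_bound (C : ℝ) (hC : 1 < C) :
    ∃ C' : ℝ, 0 < C' ∧
      ∀ lam : ℕ → ℝ, lam 0 = 0 → (∀ l : ℕ, 1 ≤ l → (l : ℝ) ^ 2 / C ≤ lam l) →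
      ∀ s' t' t : ℝ, 0 ≤ s' → s' < t' → t' < t →
        (∑' l : ℕ, ∫ u in s'..t', Real.exp (-2 * (t - u) * lam l))
          ≤ C' * h1 (t' - s') := by
  have hC0 : 0 < C := by linarith
  refine ⟨3 + C / 2, by positivity, fun lam hlam0 hlam s' t' t _ hst htt => ?_⟩
  have hlam_pos (l : ℕ) (hl : 1 ≤ l) : 0 < lam l :=
    (div_pos (pow_pos (Nat.cast_pos.2 hl) 2) hC0).trans_le (hlam l hl)
  have hlam_nonneg (l : ℕ) : 0 ≤ lam l := by
    rcases Nat.eq_zero_or_pos l with rfl | hl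
    exacts [hlam0.ge, (hlam_pos l hl).le]
  have hlam_inv (l : ℕ) (hl : 1 ≤ l) : (2 * lam l)⁻¹ ≤ C / 2 / (l : ℝ) ^ 2 := calc
    (2 * lam l)⁻¹ ≤ (2 * ((l : ℝ) ^ 2 / C))⁻¹ :=
        inv_anti₀ (by have := hlam_pos l hl; positivity) (by linarith [hlam l hl])
    _ = C / 2 / (l : ℝ) ^ 2 := by field_simp
  obtain ⟨k, hk, hk_bound⟩ := exists_mul_add_div_le_h1 (sub_pos.2 hst) (by positivity : 0 ≤ C / 2)
  refine le_trans (tsum_le_of_le_of_le_div_sq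
    (fun l => intervalIntegral.integral_nonneg hst.le fun _ _ => (exp_pos _).le)
    (fun l => integral_exp_neg_two_mul_le_sub (hlam_nonneg l) hst.le htt.le)
    (fun l hl => (integral_exp_neg_two_mul_le_inv (hlam_pos l hl) htt.le).trans (hlam_inv l hl))
    (by positivity) hk) hk_bound
end

section
/- With λ_l ≥ l²/C for l ≥ 1 (C > 1), for all 0 ≤ s' < s < t: Σ_{l=1}^∞ (1 − e^{−λ_l (t−s')})²/λ_l ≤ C'·h₂(t−s'), where h₂(u) = √u for u ∈ [0,1) and h₂(u) = 1 for u ≥ 1, and C' depends only on C. -/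
/-!
Write `τ = t - s'`. Each term `(1 - e^{-λτ})²/λ` is at most `τ`, since `(1 - e^{-a})² ≤ 1 - e^{-a} ≤ a`,
and at most `1/λ_l ≤ C/l²`. Using the first bound for `l ≤ N` and the second for `l > N` gives
`Nτ + C/N`; for `τ < 1` take `N ≈ τ^{-1/2}`, and for `τ ≥ 1` take `N = 1`.
-/

open Real MeasureTheory

/-- `h₂(u) = √u` for `u ∈ [0,1)` and `h₂(u) = 1` for `u ≥ 1`. -/
noncomputable def h2 (u : ℝ) : ℝ := if u < 1 then Real.sqrt u else 1

open Finset

lemma sq_one_sub_exp_neg_le {a : ℝ} (ha : 0 ≤ a) : (1 - exp (-a)) ^ 2 ≤ a := by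
  have h_le_one : exp (-a) ≤ 1 := exp_le_one_iff.2 (neg_nonpos.2 ha)
  have h_le_a : 1 - exp (-a) ≤ a := by linarith [add_one_le_exp (-a)]
  nlinarith [exp_pos (-a)]

lemma sq_one_sub_exp_neg_le_one {a : ℝ} (ha : 0 ≤ a) : (1 - exp (-a)) ^ 2 ≤ 1 := by
  have h_le_one : exp (-a) ≤ 1 := exp_le_one_iff.2 (neg_nonpos.2 ha)
  nlinarith [exp_pos (-a)]

lemma sq_one_sub_exp_neg_mul_div_le {μ τ : ℝ} (hμ : 0 < μ) (hτ : 0 ≤ τ) :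
    (1 - exp (-(μ * τ))) ^ 2 / μ ≤ τ := by
  rw [div_le_iff₀ hμ, mul_comm τ]
  exact sq_one_sub_exp_neg_le (by positivity)

lemma sq_one_sub_exp_neg_mul_div_le_inv_of_le {b μ τ : ℝ} (hb : 0 < b) (hbμ : b ≤ μ)
    (hτ : 0 ≤ τ) : (1 - exp (-(μ * τ))) ^ 2 / μ ≤ b⁻¹ := by
  have hμ : 0 < μ := hb.trans_le hbμ
  calc (1 - exp (-(μ * τ))) ^ 2 / μ ≤ 1 / μ :=
        div_le_div_of_nonneg_right (sq_one_sub_exp_neg_le_one (by positivity)) hμ.le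
    _ ≤ b⁻¹ := by rw [one_div]; exact inv_anti₀ hb hbμ

lemma sum_inv_sq_le_inv_of_forall_lt {N : ℕ} (hN : N ≠ 0) {u : Finset ℕ} (hu : ∀ l ∈ u, N < l) :
    ∑ l ∈ u, ((l : ℝ) ^ 2)⁻¹ ≤ (N : ℝ)⁻¹ := by
  set M := max N (u.sup id)
  have hsub : u ⊆ Ioc N M := fun l hl =>
    mem_Ioc.2 ⟨hu l hl, (le_sup (f := id) hl).trans (le_max_right _ _)⟩
  calc ∑ l ∈ u, ((l : ℝ) ^ 2)⁻¹ ≤ ∑ l ∈ Ioc N M, ((l : ℝ) ^ 2)⁻¹ :=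
        sum_le_sum_of_subset_of_nonneg hsub fun _ _ _ => by positivity
    _ ≤ (N : ℝ)⁻¹ - (M : ℝ)⁻¹ := sum_Ioc_inv_sq_le_sub hN (le_max_left _ _)
    _ ≤ (N : ℝ)⁻¹ := sub_le_self _ (by positivity)

lemma tsum_le_of_le_of_le_div_sq_s18 {F : ℕ → ℝ} {A c : ℝ} (hA : 0 ≤ A) (hc : 0 ≤ c) (hF0 : F 0 = 0)
    (hFA : ∀ l, 1 ≤ l → F l ≤ A) (hFc : ∀ l, 1 ≤ l → F l ≤ c / (l : ℝ) ^ 2)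
    {N : ℕ} (hN : 1 ≤ N) :
    ∑' l, F l ≤ N * A + c / N := by
  refine tsum_le_of_sum_le' (by positivity) fun u => ?_
  rw [← sum_erase u hF0, ← sum_filter_add_sum_filter_not _ (· ≤ N)]
  have hpos : ∀ l ∈ u.erase 0, 1 ≤ l := fun l hl => Nat.one_le_iff_ne_zero.2 (ne_of_mem_erase hl)
  have head : ∑ l ∈ (u.erase 0).filter (· ≤ N), F l ≤ N * A := by
    have hcard : #((u.erase 0).filter (· ≤ N)) ≤ N := by
      refine (card_le_card fun l hl => ?_).trans (Nat.card_Icc 1 N).le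
      rw [mem_filter] at hl
      exact mem_Icc.2 ⟨hpos l hl.1, hl.2⟩
    calc ∑ l ∈ (u.erase 0).filter (· ≤ N), F l
        ≤ #((u.erase 0).filter (· ≤ N)) • A :=
          sum_le_card_nsmul _ _ _ fun l hl => hFA l (hpos l (mem_filter.1 hl).1)
      _ ≤ N * A := by rw [nsmul_eq_mul]; gcongr
  have tail : ∑ l ∈ (u.erase 0).filter (¬· ≤ N), F l ≤ c / N := by
    calc ∑ l ∈ (u.erase 0).filter (¬· ≤ N), F l
        ≤ ∑ l ∈ (u.erase 0).filter (¬· ≤ N), c * ((l : ℝ) ^ 2)⁻¹ :=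
          sum_le_sum fun l hl => (hFc l (hpos l (mem_filter.1 hl).1)).trans_eq (div_eq_mul_inv _ _)
      _ ≤ c * (N : ℝ)⁻¹ := by
          rw [← mul_sum]
          exact mul_le_mul_of_nonneg_left (sum_inv_sq_le_inv_of_forall_lt (by omega)
            fun l hl => not_le.1 (mem_filter.1 hl).2) hc
      _ = c / N := (div_eq_mul_inv _ _).symm
  linarith

lemma exists_nat_mul_add_div_le_sqrt {τ : ℝ} (hτ0 : 0 < τ) (hτ1 : τ ≤ 1) {c : ℝ} (hc : 0 ≤ c) :
    ∃ N : ℕ, 1 ≤ N ∧ N * τ + c / N ≤ (2 + c) * √τ := by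
  have hsqrt : 0 < √τ := sqrt_pos.2 hτ0
  have hτ_le : τ ≤ √τ := (le_sqrt hτ0.le hτ0.le).2 (by nlinarith)
  set N := ⌈(√τ)⁻¹⌉₊
  have hN_ge : (√τ)⁻¹ ≤ N := Nat.le_ceil _
  have hN_pos : (0 : ℝ) < N := (inv_pos.2 hsqrt).trans_le hN_ge
  have hN_lt : (N : ℝ) < (√τ)⁻¹ + 1 := Nat.ceil_lt_add_one (by positivity)
  refine ⟨N, Nat.cast_pos.1 hN_pos, ?_⟩
  have head : N * τ ≤ 2 * √τ := by
    have : (√τ)⁻¹ * τ = √τ := by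
      rw [inv_mul_eq_div, div_eq_iff hsqrt.ne', mul_self_sqrt hτ0.le]
    nlinarith
  have tail : c / N ≤ c * √τ := by
    rw [div_eq_mul_inv]
    gcongr
    simpa using inv_anti₀ (by positivity) hN_ge
  linarith

/-- If `λ_l ≥ l²/C` for `l ≥ 1` (`C > 1`), then for all `0 ≤ s' < s < t`,
`Σ_{l≥1} (1 − e^{−λ_l(t−s')})²/λ_l ≤ C' h₂(t−s')` with `C'` depending only on `C`. -/
theorem difference_kernel_sum_bound (C : ℝ) (hC : 1 < C) :
    ∃ C' : ℝ, 0 < C' ∧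
      ∀ lam : ℕ → ℝ, (∀ l : ℕ, 1 ≤ l → (l : ℝ) ^ 2 / C ≤ lam l) →
      ∀ s' s t : ℝ, 0 ≤ s' → s' < s → s < t →
        (∑' l : ℕ, if l = 0 then 0
          else (1 - Real.exp (-(lam l * (t - s')))) ^ 2 / lam l)
          ≤ C' * h2 (t - s') := by
  refine ⟨2 * C + 2, by linarith, fun lam hlam s' s t _ hs's hst => ?_⟩
  have hC0 : 0 < C := by linarith
  have hτ : 0 < t - s' := by linarith
  have hlam_lb : ∀ l : ℕ, 1 ≤ l → 0 < (l : ℝ) ^ 2 / C := fun l hl => by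
    have : (1 : ℝ) ≤ l := by exact_mod_cast hl
    positivity
  set F : ℕ → ℝ := fun l => if l = 0 then 0
    else (1 - exp (-(lam l * (t - s')))) ^ 2 / lam l
  have hFτ : ∀ l : ℕ, 1 ≤ l → F l ≤ t - s' := fun l hl => by
    simp only [F, if_neg (by omega : l ≠ 0)]
    exact sq_one_sub_exp_neg_mul_div_le ((hlam_lb l hl).trans_le (hlam l hl)) hτ.le
  have hFC : ∀ l : ℕ, 1 ≤ l → F l ≤ C / (l : ℝ) ^ 2 := fun l hl => by
    simp only [F, if_neg (by omega : l ≠ 0)]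
    exact (sq_one_sub_exp_neg_mul_div_le_inv_of_le (hlam_lb l hl) (hlam l hl) hτ.le).trans_eq
      (inv_div _ _)
  rcases lt_or_ge (t - s') 1 with hτ1 | hτ1
  · obtain ⟨N, hN, hNbound⟩ := exists_nat_mul_add_div_le_sqrt hτ hτ1.le hC0.le
    rw [h2, if_pos hτ1]
    calc _ ≤ N * (t - s') + C / N := tsum_le_of_le_of_le_div_sq_s18 hτ.le hC0.le (by simp [F]) hFτ hFC hN
      _ ≤ (2 + C) * √(t - s') := hNbound
      _ ≤ (2 * C + 2) * √(t - s') := by gcongr ?_ * _; linarith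
  · have hFC' : ∀ l : ℕ, 1 ≤ l → F l ≤ C := fun l hl => (hFC l hl).trans
      (div_le_self hC0.le (one_le_pow₀ (by exact_mod_cast hl)))
    rw [h2, if_neg (not_lt.2 hτ1)]
    calc _ ≤ ((1 : ℕ) : ℝ) * C + C / ((1 : ℕ) : ℝ) :=
          tsum_le_of_le_of_le_div_sq_s18 hC0.le hC0.le (by simp [F]) hFC' hFC le_rfl
      _ ≤ (2 * C + 2) * 1 := by push_cast; linarith
end
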